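/- Let r > 0, let n ≥ 1 be an integer, and let X_1,…,X_n be nonempty compact metric spaces with diam X_k ≤ r for every k. Then there exists a compact (r,n)-stacked space over X_1,…,X_n, and every (r,n)-stacked space over X_1,…,X_n has diameter exactly 5rn. -/

import Mathlib

open GromovHausdorff

universe u v

/-- `Z` (with two distinguished points `p true = p¹` and `p false = p⁻¹`, and pieces
`P 0, …, P (n-1)`, where `P k` plays the role of `Z_{k+1}`) is an `(r,n)`-stacked space
over the nonempty compact metric spaces `X 0, …, X (n-1)` (each of diameter at most `r`):
* `dist p¹ p⁻¹ = 3r`;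
* the pieces are pairwise disjoint and do not contain `p¹`, `p⁻¹`;
* `{p¹, p⁻¹}` together with the pieces cover `Z`;
* the piece `P k` with the induced metric is isometric to `X k`;
* `dist (p^s) z = 5r(k+1)` for every `z ∈ P k` and both `s`;
* `dist z w = 5r|k - l|` for `z ∈ P k`, `w ∈ P l` with `k ≠ l`. -/
def IsStackedSpace (r : ℝ) {n : ℕ} (X : Fin n → Type u) [∀ k, MetricSpace (X k)]
    (Z : Type v) [MetricSpace Z] (p : Bool → Z) (P : Fin n → Set Z) : Prop :=
  dist (p true) (p false) = 3 * r ∧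
  (Pairwise fun k l : Fin n => Disjoint (P k) (P l)) ∧
  (∀ (k : Fin n) (s : Bool), p s ∉ P k) ∧
  ({p true, p false} ∪ ⋃ k, P k) = Set.univ ∧
  (∀ k : Fin n, Nonempty (X k ≃ᵢ (P k : Set Z))) ∧
  (∀ (k : Fin n) (s : Bool), ∀ z ∈ P k, dist (p s) z = 5 * r * ((k : ℕ) + 1)) ∧
  (∀ k l : Fin n, k ≠ l → ∀ z ∈ P k, ∀ w ∈ P l,
    dist z w = 5 * r * |((k : ℕ) : ℝ) - ((l : ℕ) : ℝ)|)

/-! Place the poles and the spaces `X k` in layers at heights `0, 5r, …, 5rn`, measuring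
distances inside a layer in the layer itself and across layers by the difference of heights.
Every layer has diameter at most `3r ≤ 2 · 5r`, which gives the triangle inequality.
In any stacked space, points of different layers are at most `5rn` apart and points of one layer
at most `3r`; a pole and a point of the top piece realize `5rn`. -/

/-- `Σ i, Y i`, to be given the layered metric rather than the sigma topology. -/
def Layered {ι : Type*} (Y : ι → Type*) : Type _ := Σ i, Y i

namespace Layered

variable {ι : Type*} {Y : ι → Type*}

abbrev mk (i : ι) : Y i → Layered Y := Sigma.mk i

variable [∀ i, MetricSpace (Y i)] (h : ι → ℝ)

open scoped Classical in
noncomputable def layerDist : Layered Y → Layered Y → ℝ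
  | ⟨i, x⟩, ⟨j, y⟩ => if e : i = j then dist (e ▸ x) y else |h i - h j|

@[simp] lemma layerDist_mk_mk_self (i : ι) (x y : Y i) :
    layerDist h (mk i x) (mk i y) = dist x y := by
  simp [layerDist]

lemma layerDist_mk_mk_of_ne {i j : ι} (hij : i ≠ j) (x : Y i) (y : Y j) :
    layerDist h (mk i x) (mk j y) = |h i - h j| := by
  simp [layerDist, hij]

lemma abs_sub_le_layerDist (a b : Layered Y) : |h a.1 - h b.1| ≤ layerDist h a b := by
  obtain ⟨i, x⟩ := a
  obtain ⟨j, y⟩ := b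
  rcases eq_or_ne i j with rfl | hij
  · simp
  · simp [layerDist_mk_mk_of_ne h hij]

lemma layerDist_self (a : Layered Y) : layerDist h a a = 0 := by
  obtain ⟨i, x⟩ := a
  simp

lemma layerDist_comm (a b : Layered Y) : layerDist h a b = layerDist h b a := by
  obtain ⟨i, x⟩ := a
  obtain ⟨j, y⟩ := b
  rcases eq_or_ne i j with rfl | hij
  · simp [dist_comm]
  · simp [layerDist_mk_mk_of_ne h hij, layerDist_mk_mk_of_ne h hij.symm, abs_sub_comm]

variable {h} {δ : ℝ}

/-- A detour through another layer costs at least `2δ`, which pays for any distance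
inside a layer. -/
lemma layerDist_triangle (hsep : Pairwise fun i j => δ ≤ |h i - h j|)
    (hfib : ∀ i (x y : Y i), dist x y ≤ 2 * δ) (a b c : Layered Y) :
    layerDist h a c ≤ layerDist h a b + layerDist h b c := by
  obtain ⟨i, x⟩ := a
  obtain ⟨j, y⟩ := b
  obtain ⟨k, z⟩ := c
  rcases eq_or_ne i k with rfl | hik
  · rcases eq_or_ne i j with rfl | hij
    · simpa using dist_triangle x y z
    · rw [layerDist_mk_mk_self, layerDist_mk_mk_of_ne h hij, layerDist_mk_mk_of_ne h hij.symm]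
      linarith [hfib i x z, hsep hij, hsep hij.symm]
  · rw [layerDist_mk_mk_of_ne h hik]
    linarith [abs_sub_le (h i) (h j) (h k), abs_sub_le_layerDist h ⟨i, x⟩ ⟨j, y⟩,
      abs_sub_le_layerDist h ⟨j, y⟩ ⟨k, z⟩]

lemma eq_of_layerDist_eq_zero (hδ : 0 < δ) (hsep : Pairwise fun i j => δ ≤ |h i - h j|)
    {a b : Layered Y} (hab : layerDist h a b = 0) : a = b := by
  obtain ⟨i, x⟩ := a
  obtain ⟨j, y⟩ := b
  rcases eq_or_ne i j with rfl | hij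
  · rw [layerDist_mk_mk_self, dist_eq_zero] at hab
    rw [hab]
  · rw [layerDist_mk_mk_of_ne h hij] at hab
    linarith [hsep hij]

variable (h)

noncomputable abbrev metricSpace (hδ : 0 < δ) (hsep : Pairwise fun i j => δ ≤ |h i - h j|)
    (hfib : ∀ i (x y : Y i), dist x y ≤ 2 * δ) : MetricSpace (Layered Y) where
  dist := layerDist h
  dist_self := layerDist_self h
  dist_comm := layerDist_comm h
  dist_triangle := layerDist_triangle hsep hfib
  eq_of_dist_eq_zero := eq_of_layerDist_eq_zero hδ hsep

variable {h} (hδ : 0 < δ) (hsep : Pairwise fun i j => δ ≤ |h i - h j|)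
  (hfib : ∀ i (x y : Y i), dist x y ≤ 2 * δ)
include hδ hsep hfib

lemma isometry_mk (i : ι) :
    letI := metricSpace h hδ hsep hfib
    Isometry (mk i : Y i → Layered Y) :=
  letI := metricSpace h hδ hsep hfib
  Isometry.of_dist_eq (layerDist_mk_mk_self h i)

lemma compactSpace [Finite ι] [∀ i, CompactSpace (Y i)] :
    letI := metricSpace h hδ hsep hfib
    CompactSpace (Layered Y) := by
  let _ := metricSpace h hδ hsep hfib
  refine ⟨?_⟩
  rw [show (Set.univ : Set (Layered Y)) = ⋃ i, Set.range (mk i) from Set.Sigma.univ Y]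
  exact isCompact_iUnion fun i => isCompact_range (isometry_mk hδ hsep hfib i).continuous

end Layered

lemma one_le_abs_natCast_sub_natCast {a b : ℕ} (hab : a ≠ b) :
    (1 : ℝ) ≤ |(a : ℝ) - b| := by
  exact_mod_cast Int.one_le_abs (sub_ne_zero.2 (Int.natCast_inj.not.2 hab))

namespace StackedSpace

variable {r : ℝ} {n : ℕ} {X : Fin n → Type u} [∀ k, MetricSpace (X k)]

abbrev Layer (X : Fin n → Type u) (o : Option (Fin n)) : Type u := o.elim (ULift Bool) X

variable (r) in
@[reducible] noncomputable def layerMetric (hr : 0 < r) : ∀ o, MetricSpace (Layer X o)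
  | none => MetricSpace.induced (fun b : ULift Bool => if b.down then 3 * r else 0)
      (by rintro ⟨_ | _⟩ ⟨_ | _⟩ <;> simp [hr.ne']) inferInstance
  | some k => (inferInstance : MetricSpace (X k))

def level : Option (Fin n) → ℕ
  | none => 0
  | some k => k + 1

lemma level_injective : Function.Injective (level (n := n)) := by
  rintro (_ | k) (_ | l) hkl <;> simp_all [level, Fin.val_inj]

lemma abs_sub_level (hr : 0 < r) (o o' : Option (Fin n)) :
    |5 * r * level o - 5 * r * level o'| = 5 * r * |(level o : ℝ) - level o'| := by
  rw [← mul_sub, abs_mul, abs_of_pos (by positivity)]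

lemma pairwise_le_abs_sub_level (hr : 0 < r) :
    Pairwise fun o o' : Option (Fin n) => 5 * r ≤ |5 * r * level o - 5 * r * level o'| := by
  intro o o' hoo'
  rw [abs_sub_level hr]
  exact le_mul_of_one_le_right (by positivity)
    (one_le_abs_natCast_sub_natCast (level_injective.ne hoo'))

lemma layerMetric_dist_le (hr : 0 < r) (hX : ∀ k (x y : X k), dist x y ≤ r) :
    ∀ o (x y : Layer X o), (layerMetric r hr o).dist x y ≤ 2 * (5 * r)
  | none, ⟨x⟩, ⟨y⟩ => by
    change dist (if x then 3 * r else 0) (if y then 3 * r else 0) ≤ 2 * (5 * r)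
    cases x <;> cases y <;> simp [Real.dist_eq, abs_of_pos hr] <;> linarith
  | some k, x, y => (hX k x y).trans (by linarith)

variable (r) in
noncomputable abbrev metricSpace (hr : 0 < r) (hX : ∀ k (x y : X k), dist x y ≤ r) :
    MetricSpace (Layered (Layer X)) :=
  letI := layerMetric (X := X) r hr
  Layered.metricSpace (fun o => 5 * r * level o) (by positivity) (pairwise_le_abs_sub_level hr)
    (layerMetric_dist_le hr hX)

variable (hr : 0 < r) (hX : ∀ k (x y : X k), dist x y ≤ r)
include hr hX

lemma compactSpace [∀ k, CompactSpace (X k)] :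
    letI := metricSpace r hr hX
    CompactSpace (Layered (Layer X)) := by
  let _ := layerMetric (X := X) r hr
  have : ∀ o, CompactSpace (Layer X o)
    | none =>
      have : Finite (Layer X none) := inferInstanceAs (Finite (ULift Bool))
      Finite.compactSpace
    | some k => (inferInstance : CompactSpace (X k))
  exact Layered.compactSpace _ _ _

lemma isStackedSpace :
    letI := metricSpace r hr hX
    IsStackedSpace r X (Layered (Layer X)) (fun s => Layered.mk none ⟨s⟩)
      (fun k => Set.range (Layered.mk (some k))) := by
  let _ := layerMetric (X := X) r hr
  let _ := metricSpace r hr hX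
  have hiso := Layered.isometry_mk (by positivity) (pairwise_le_abs_sub_level hr)
    (layerMetric_dist_le hr hX)
  refine ⟨?_, ?_, ?_, ?_, fun k => ⟨(hiso (some k)).isometryEquivOnRange⟩, ?_, ?_⟩
  · refine (Layered.layerDist_mk_mk_self _ none _ _).trans ?_
    change dist (3 * r) 0 = 3 * r
    simp [hr.le]
  · intro k l hkl
    rw [Set.disjoint_left]
    rintro _ ⟨x, rfl⟩ ⟨y, hy⟩
    exact hkl (Option.some_injective _ (congrArg Sigma.fst hy)).symm
  · rintro k s ⟨x, hx⟩
    exact Option.some_ne_none k (congrArg Sigma.fst hx)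
  · refine Set.eq_univ_of_forall ?_
    rintro ⟨_ | k, y⟩
    · obtain ⟨_ | _⟩ := y
      exacts [Or.inl (Or.inr rfl), Or.inl (Or.inl rfl)]
    · exact Or.inr (Set.mem_iUnion.2 ⟨k, y, rfl⟩)
  · rintro k s _ ⟨x, rfl⟩
    refine (Layered.layerDist_mk_mk_of_ne _ (Option.some_ne_none k).symm _ _).trans ?_
    rw [abs_sub_level hr,
      show (level none : ℝ) - level (some k) = -((k : ℕ) + 1) by simp [level], abs_neg,
      abs_of_nonneg (by positivity)]
  · rintro k l hkl _ ⟨x, rfl⟩ _ ⟨y, rfl⟩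
    refine (Layered.layerDist_mk_mk_of_ne _ (Option.some_injective _ |>.ne hkl) _ _).trans ?_
    rw [abs_sub_level hr]
    simp [level]

end StackedSpace

namespace IsStackedSpace

variable {r : ℝ} {n : ℕ} {X : Fin n → Type u} [∀ k, MetricSpace (X k)]
  {Z : Type v} [MetricSpace Z] {p : Bool → Z} {P : Fin n → Set Z}

lemma nonempty_isometryEquiv (h : IsStackedSpace r X Z p P) (k : Fin n) :
    Nonempty (X k ≃ᵢ (P k : Set Z)) :=
  h.2.2.2.2.1 k

lemma dist_pole_of_mem (h : IsStackedSpace r X Z p P) {k : Fin n} (s : Bool) {z : Z}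
    (hz : z ∈ P k) : dist (p s) z = 5 * r * ((k : ℕ) + 1) :=
  h.2.2.2.2.2.1 k s z hz

lemma dist_of_mem_of_ne (h : IsStackedSpace r X Z p P) {k l : Fin n} (hkl : k ≠ l) {z w : Z}
    (hz : z ∈ P k) (hw : w ∈ P l) :
    dist z w = 5 * r * |((k : ℕ) : ℝ) - ((l : ℕ) : ℝ)| :=
  h.2.2.2.2.2.2 k l hkl z hz w hw

lemma nonneg (h : IsStackedSpace r X Z p P) : 0 ≤ r := by
  linarith [h.1 ▸ dist_nonneg (x := p true) (y := p false)]

lemma eq_pole_or_mem_piece (h : IsStackedSpace r X Z p P) (z : Z) :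
    (∃ s, z = p s) ∨ ∃ k, z ∈ P k := by
  have hz : z ∈ ({p true, p false} ∪ ⋃ k, P k : Set Z) := h.2.2.2.1 ▸ Set.mem_univ z
  simp only [Set.mem_union, Set.mem_insert_iff, Set.mem_singleton_iff, Set.mem_iUnion] at hz
  rcases hz with (rfl | rfl) | hk
  exacts [Or.inl ⟨true, rfl⟩, Or.inl ⟨false, rfl⟩, Or.inr hk]

lemma dist_pole_pole_le (h : IsStackedSpace r X Z p P) (s s' : Bool) :
    dist (p s) (p s') ≤ 3 * r := by
  have := h.1
  have := h.nonneg
  cases s <;> cases s' <;> simp [dist_comm (p false)] <;> linarith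

lemma dist_le_of_mem_piece (h : IsStackedSpace r X Z p P) (hX : ∀ k (x y : X k), dist x y ≤ r)
    {k : Fin n} {z w : Z} (hz : z ∈ P k) (hw : w ∈ P k) : dist z w ≤ r := by
  obtain ⟨e⟩ := h.nonempty_isometryEquiv k
  calc dist z w = dist (e.symm ⟨z, hz⟩) (e.symm ⟨w, hw⟩) := by rw [e.symm.dist_eq]; rfl
    _ ≤ r := hX k _ _

lemma dist_pole_le (h : IsStackedSpace r X Z p P) (hn : 1 ≤ n) (s : Bool) (z : Z) :
    dist (p s) z ≤ 5 * r * n := by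
  have hr := h.nonneg
  rcases h.eq_pole_or_mem_piece z with ⟨s', rfl⟩ | ⟨k, hk⟩
  · have : (1 : ℝ) ≤ n := by exact_mod_cast hn
    nlinarith [h.dist_pole_pole_le s s']
  · rw [h.dist_pole_of_mem s hk]
    have : ((k : ℕ) : ℝ) + 1 ≤ n := by exact_mod_cast k.2
    gcongr

lemma dist_le (h : IsStackedSpace r X Z p P) (hn : 1 ≤ n) (hX : ∀ k (x y : X k), dist x y ≤ r)
    (z w : Z) : dist z w ≤ 5 * r * n := by
  have hr := h.nonneg
  rcases h.eq_pole_or_mem_piece z with ⟨s, rfl⟩ | ⟨k, hk⟩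
  · exact h.dist_pole_le hn s w
  rcases h.eq_pole_or_mem_piece w with ⟨s, rfl⟩ | ⟨l, hl⟩
  · exact dist_comm (p s) z ▸ h.dist_pole_le hn s z
  rcases eq_or_ne k l with rfl | hkl
  · have : (1 : ℝ) ≤ n := by exact_mod_cast hn
    nlinarith [h.dist_le_of_mem_piece hX hk hl]
  · rw [h.dist_of_mem_of_ne hkl hk hl]
    have hkn : ((k : ℕ) : ℝ) ≤ n := by exact_mod_cast k.2.le
    have hln : ((l : ℕ) : ℝ) ≤ n := by exact_mod_cast l.2.le
    gcongr
    exact abs_sub_le_of_nonneg_of_le (by positivity) hkn (by positivity) hln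

lemma exists_dist_pole_eq (h : IsStackedSpace r X Z p P) (hn : 1 ≤ n) [∀ k, Nonempty (X k)] :
    ∃ z, dist (p true) z = 5 * r * n := by
  obtain ⟨e⟩ := h.nonempty_isometryEquiv ⟨n - 1, by omega⟩
  refine ⟨e (Classical.arbitrary _), ?_⟩
  rw [h.dist_pole_of_mem true (e _).2]
  push_cast [Nat.cast_sub hn]
  ring

theorem diam_univ_eq (h : IsStackedSpace r X Z p P) (hn : 1 ≤ n) [∀ k, Nonempty (X k)]
    (hX : ∀ k (x y : X k), dist x y ≤ r) : Metric.diam (Set.univ : Set Z) = 5 * r * n := by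
  have hdist := h.dist_le hn hX
  obtain ⟨z, hz⟩ := h.exists_dist_pole_eq hn
  refine le_antisymm (Metric.diam_le_of_forall_dist_le ?_ fun x _ y _ => hdist x y) ?_
  · exact dist_nonneg.trans (hdist z z)
  · have hbdd := Metric.isBounded_iff.2 ⟨_, fun x (_ : x ∈ Set.univ) y _ => hdist x y⟩
    exact hz ▸ Metric.dist_le_diam_of_mem hbdd (Set.mem_univ _) (Set.mem_univ _)

end IsStackedSpace

theorem exists_stackedSpace_and_diam_eq (r : ℝ) (hr : 0 < r) (n : ℕ) (hn : 1 ≤ n)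
    (X : Fin n → Type u) [∀ k, MetricSpace (X k)] [∀ k, CompactSpace (X k)]
    [∀ k, Nonempty (X k)]
    (hdiam : ∀ k, Metric.diam (Set.univ : Set (X k)) ≤ r) :
    (∃ (Z : Type u) (mZ : MetricSpace Z) (p : Bool → Z) (P : Fin n → Set Z),
      letI := mZ
      CompactSpace Z ∧ IsStackedSpace r X Z p P) ∧
    (∀ (Z : Type v) (mZ : MetricSpace Z) (p : Bool → Z) (P : Fin n → Set Z),
      letI := mZ
      IsStackedSpace r X Z p P → Metric.diam (Set.univ : Set Z) = 5 * r * n) := by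
  have hX : ∀ k (x y : X k), dist x y ≤ r := fun k x y =>
    (Metric.dist_le_diam_of_mem Metric.isBounded_of_compactSpace (Set.mem_univ x)
      (Set.mem_univ y)).trans (hdiam k)
  exact ⟨⟨_, StackedSpace.metricSpace r hr hX, _, _, StackedSpace.compactSpace hr hX,
    StackedSpace.isStackedSpace hr hX⟩, fun _ _ _ _ h => h.diam_univ_eq hn hX⟩
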